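/- arXiv:1506.06781 — 5 statements merged into one kernel-verified Lean document; each statement's English description precedes it below -/
import Mathlib

section
/- Relative Prokhorov closeness is characterized by approximate coupling: finite Borel measures μ_X and μ_Y on a compact metric space Z are relative (ε,δ)-close if and only if there exist measures μ̃_X ≤ μ_X, μ̃_Y ≤ μ_Y with e^{-δ}μ_X ≤ μ̃_X and e^{-δ}μ_Y ≤ μ̃_Y, and a coupling γ of μ̃_X and μ̃_Y supported in {(x,y) : d(x,y) ≤ ε}. -/
/-!
Relative closeness gives, by a layer-cake argument, the dual feasibility inequality
`0 ≤ Q_μ(f) + Q_ν(g)` whenever `f(x) + g(y) ≥ 0` for `dist x y ≤ ε`, where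
`Q_μ(f) = ∫ max(f, e^{-δ} f) dμ = ∫ f⁺ dμ - e^{-δ} ∫ f⁻ dμ` is sublinear. Hahn–Banach then
produces a linear functional on `C(Z × Z)` dominated by
`inf {Q_μ(f) + Q_ν(g) : φ ≤ f ⊕ g on the ε-diagonal}`; it is positive, so by
Riesz–Markov–Kakutani it is integration against a measure `γ`. Testing the domination against
`u ∘ Prod.fst`, `-(u ∘ Prod.fst)`, … pins the marginals of `γ` between `e^{-δ} μ` and `μ`, and
testing it against functions vanishing on the ε-diagonal shows that `γ` lives there.
The converse is the transport inequality `γ(π₁⁻¹ A) ≤ γ(π₂⁻¹ A^ε)`.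
-/

open MeasureTheory Metric Set Filter
open scoped ENNReal NNReal BoundedContinuousFunction CompactlySupported

theorem Continuous.integrable_of_compactSpace {X E : Type*} [TopologicalSpace X] [CompactSpace X]
    [MeasurableSpace X] [OpensMeasurableSpace X] [NormedAddCommGroup E] {μ : Measure X}
    [IsFiniteMeasureOnCompacts μ] {f : X → E} (hf : Continuous f) : Integrable f μ :=
  hf.integrable_of_hasCompactSupport (.of_compactSpace f)

namespace MeasureTheory.Measure

variable {Ω : Type*} [PseudoEMetricSpace Ω] [MeasurableSpace Ω] [BorelSpace Ω]

theorem le_of_forall_integral_le {μ ν : Measure Ω} [IsFiniteMeasure μ] [IsFiniteMeasure ν]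
    (h : ∀ f : Ω →ᵇ ℝ≥0, ∫ x, (f x : ℝ) ∂μ ≤ ∫ x, (f x : ℝ) ∂ν) : μ ≤ ν := by
  have h_closed {F : Set Ω} (hF : IsClosed F) : μ F ≤ ν F := by
    have hδ := tendsto_one_div_add_atTop_nhds_zero_nat (𝕜 := ℝ)
    refine (ENNReal.toReal_le_toReal (measure_ne_top μ F) (measure_ne_top ν F)).1 <|
      le_of_tendsto_of_tendsto' (tendsto_integral_thickenedIndicator_of_isClosed μ hF
        (fun _ ↦ Nat.one_div_pos_of_nat) hδ)
      (tendsto_integral_thickenedIndicator_of_isClosed ν hF (fun _ ↦ Nat.one_div_pos_of_nat) hδ)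
      fun n ↦ h _
  refine Measure.le_iff.2 fun s hs ↦ ?_
  rw [hs.measure_eq_iSup_isClosed_of_ne_top (measure_ne_top μ s)]
  exact iSup₂_le fun F hFs ↦ iSup_le fun hF ↦ (h_closed hF).trans (measure_mono hFs)

theorem measure_compl_eq_zero_of_integral_nonpos (γ : Measure Ω) [IsFiniteMeasure γ] {D : Set Ω}
    (hD : IsClosed D) (h : ∀ f : Ω →ᵇ ℝ, (∀ x, 0 ≤ f x) → EqOn f 0 D → ∫ x, f x ∂γ ≤ 0) :
    γ Dᶜ = 0 := by
  refine le_antisymm ?_ bot_le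
  rw [hD.isOpen_compl.measure_eq_iSup_isClosed]
  refine iSup₂_le fun F hFD ↦ iSup_le fun hF ↦ ?_
  obtain ⟨f, hfD, hfF, hf01⟩ :=
    exists_bounded_zero_one_of_closed hD hF (disjoint_compl_right.mono_right hFD)
  have hFf : F.indicator 1 ≤ f := by
    intro x
    by_cases hx : x ∈ F
    · simp [hx, hfF hx]
    · simp [hx, (hf01 x).1]
  have : γ.real F ≤ 0 := calc
    γ.real F = ∫ x, F.indicator 1 x ∂γ := (integral_indicator_one hF.measurableSet).symm
    _ ≤ ∫ x, f x ∂γ :=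
      integral_mono ((integrable_const 1).indicator hF.measurableSet) (f.integrable γ) hFf
    _ ≤ 0 := h f (fun x ↦ (hf01 x).1) hfD
  exact ((measureReal_eq_zero_iff (measure_ne_top γ F)).1
    (le_antisymm this measureReal_nonneg)).le

end MeasureTheory.Measure

theorem ContinuousMap.exists_measure_integral_eq {X : Type*} [TopologicalSpace X] [CompactSpace X]
    [T2Space X] [MeasurableSpace X] [BorelSpace X] (Λ : C(X, ℝ) →ₗ[ℝ] ℝ)
    (hΛ : ∀ f, 0 ≤ f → 0 ≤ Λ f) :
    ∃ γ : Measure X, IsFiniteMeasure γ ∧ ∀ f : C(X, ℝ), ∫ x, f x ∂γ = Λ f := by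
  let e : C_c(X, ℝ) →ₗ[ℝ] C(X, ℝ) :=
    { toFun := CompactlySupportedContinuousMap.continuousMapEquiv.symm
      map_add' _ _ := rfl
      map_smul' _ _ := rfl }
  let Λ' : C_c(X, ℝ) →ₚ[ℝ] ℝ := .mk₀ (Λ ∘ₗ e) fun f hf ↦ hΛ (e f) hf
  exact ⟨RealRMK.rieszMeasure Λ', inferInstance, fun f ↦
    RealRMK.integral_rieszMeasure Λ' (CompactlySupportedContinuousMap.continuousMapEquiv f)⟩

theorem ConvexCone.exists_linearMap_le_of_sublinear {E V : Type*} [AddCommGroup E] [Module ℝ E]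
    [AddCommGroup V] [Module ℝ V] (C : ConvexCone ℝ E) (T : V →ₗ[ℝ] E)
    (q : V → ℝ) (hq_add : ∀ v w, q (v + w) ≤ q v + q w)
    (hq_smul : ∀ c : ℝ, 0 < c → ∀ v, q (c • v) = c * q v)
    (hT : ∀ h, ∃ v, T v - h ∈ C) (hq : ∀ v, T v ∈ C → 0 ≤ q v) :
    ∃ Λ : E →ₗ[ℝ] ℝ, ∀ h v, T v - h ∈ C → Λ h ≤ q v := by
  let p (h : E) : ℝ := ⨅ v : {v // T v - h ∈ C}, q v
  have hne (h : E) : Nonempty {v // T v - h ∈ C} := (hT h).elim fun v hv ↦ ⟨⟨v, hv⟩⟩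
  have hbdd (h : E) : BddBelow (range fun v : {v // T v - h ∈ C} ↦ q v) := by
    obtain ⟨w, hw⟩ := hT (-h)
    refine ⟨-q w, forall_mem_range.2 fun v ↦ ?_⟩
    have : T (v.1 + w) ∈ C := by simpa [map_add] using C.add_mem v.2 hw
    linarith [hq _ this, hq_add v.1 w]
  have hp_le {h : E} {v : V} (hv : T v - h ∈ C) : p h ≤ q v := ciInf_le (hbdd h) ⟨v, hv⟩
  have hp_add (h₁ h₂ : E) : p (h₁ + h₂) ≤ p h₁ + p h₂ :=
    le_ciInf_add_ciInf fun v₁ v₂ ↦ by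
      have := C.add_mem v₁.2 v₂.2
      rw [← add_sub_add_comm, ← map_add] at this
      exact (hp_le this).trans (hq_add _ _)
  have hp_smul_le {c : ℝ} (hc : 0 < c) (h : E) : p (c • h) ≤ c * p h := by
    rw [← div_le_iff₀' hc]
    refine le_ciInf fun v ↦ ?_
    rw [div_le_iff₀' hc, ← hq_smul c hc]
    exact hp_le (by simpa [map_smul, smul_sub] using C.smul_mem hc v.2)
  obtain ⟨Λ, -, hΛ⟩ := exists_extension_of_le_sublinear ⟨⊥, 0⟩ p
    (fun c hc h ↦ le_antisymm (hp_smul_le hc h) <| by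
      have := hp_smul_le (inv_pos.2 hc) (c • h)
      rw [inv_smul_smul₀ hc.ne'] at this
      rwa [← le_div_iff₀' hc, div_eq_inv_mul])
    hp_add
    (fun ⟨x, hx⟩ ↦ by
      obtain rfl : x = 0 := hx
      exact le_ciInf fun v ↦ hq v.1 (by simpa using v.2))
  exact ⟨Λ, fun h v hv ↦ (hΛ h).trans (hp_le hv)⟩

section SkewIntegral

variable {Z : Type*} [TopologicalSpace Z] [MeasurableSpace Z] (μ : Measure Z) {k : ℝ}

noncomputable def skewIntegral (k : ℝ) (f : C(Z, ℝ)) : ℝ :=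
  ∫ x, max (f x) (k * f x) ∂μ

@[simp]
theorem skewIntegral_zero : skewIntegral μ k 0 = 0 := by
  simp [skewIntegral]

theorem skewIntegral_add_le [CompactSpace Z] [OpensMeasurableSpace Z] [IsFiniteMeasure μ]
    (f g : C(Z, ℝ)) : skewIntegral μ k (f + g) ≤ skewIntegral μ k f + skewIntegral μ k g := by
  have hint (φ : C(Z, ℝ)) : Integrable (fun x ↦ max (φ x) (k * φ x)) μ :=
    (by fun_prop : Continuous fun x ↦ max (φ x) (k * φ x)).integrable_of_compactSpace
  rw [skewIntegral, skewIntegral, skewIntegral, ← integral_add (hint f) (hint g)]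
  refine integral_mono (hint (f + g)) ((hint f).add (hint g)) fun x ↦ ?_
  simp only [ContinuousMap.add_apply, mul_add]
  exact max_le (add_le_add (le_max_left _ _) (le_max_left _ _))
    (add_le_add (le_max_right _ _) (le_max_right _ _))

theorem skewIntegral_smul {c : ℝ} (hc : 0 ≤ c) (f : C(Z, ℝ)) :
    skewIntegral μ k (c • f) = c * skewIntegral μ k f := by
  rw [skewIntegral, skewIntegral, ← integral_const_mul]
  congr 1 with x
  simp only [ContinuousMap.smul_apply, smul_eq_mul, mul_left_comm k c, mul_max_of_nonneg _ _ hc]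

theorem skewIntegral_of_nonneg (hk : k ≤ 1) {f : C(Z, ℝ)} (hf : 0 ≤ f) :
    skewIntegral μ k f = ∫ x, f x ∂μ := by
  unfold skewIntegral
  congr 1 with x
  exact max_eq_left (mul_le_of_le_one_left (hf x) hk)

theorem skewIntegral_neg_of_nonneg (hk : k ≤ 1) {f : C(Z, ℝ)} (hf : 0 ≤ f) :
    skewIntegral μ k (-f) = -(k * ∫ x, f x ∂μ) := by
  rw [skewIntegral, ← integral_const_mul, ← integral_neg]
  congr 1 with x
  simp only [ContinuousMap.neg_apply, mul_neg]
  exact max_eq_right (neg_le_neg (mul_le_of_le_one_left (hf x) hk))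

theorem skewIntegral_eq_sub [CompactSpace Z] [OpensMeasurableSpace Z] [IsFiniteMeasure μ]
    (hk : k ≤ 1) (f : C(Z, ℝ)) :
    skewIntegral μ k f = ∫ x, max (f x) 0 ∂μ - k * ∫ x, max (-f x) 0 ∂μ := by
  rw [skewIntegral, ← integral_const_mul, ← integral_sub
    (by fun_prop : Continuous fun x ↦ max (f x) 0).integrable_of_compactSpace
    (by fun_prop : Continuous fun x ↦ k * max (-f x) 0).integrable_of_compactSpace]
  congr 1 with x
  rcases le_total 0 (f x) with h | h
  · rw [max_eq_left (mul_le_of_le_one_left h hk), max_eq_left h, max_eq_right (neg_nonpos.2 h)]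
    ring
  · rw [max_eq_right (le_mul_of_le_one_left h hk), max_eq_right h, max_eq_left (neg_nonneg.2 h)]
    ring

end SkewIntegral

theorem lintegral_ofReal_le_mul_of_meas_lt_le {α β : Type*} [MeasurableSpace α]
    [MeasurableSpace β] {μ : Measure α} {ν : Measure β} {φ : β → ℝ} {ψ : α → ℝ} {c : ℝ≥0∞}
    (hφ : 0 ≤ φ) (hψ : 0 ≤ ψ) (hφm : Measurable φ) (hψm : Measurable ψ)
    (h : ∀ t > 0, ν {y | t < φ y} ≤ c * μ {x | t ≤ ψ x}) :
    ∫⁻ y, ENNReal.ofReal (φ y) ∂ν ≤ c * ∫⁻ x, ENNReal.ofReal (ψ x) ∂μ := by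
  rw [lintegral_eq_lintegral_meas_lt ν (.of_forall hφ) hφm.aemeasurable,
    lintegral_eq_lintegral_meas_le μ (.of_forall hψ) hψm.aemeasurable,
    ← lintegral_const_mul c (Antitone.measurable (f := fun t ↦ μ {x | t ≤ ψ x})
      fun s t hst ↦ measure_mono fun x hx ↦ hst.trans hx)]
  exact setLIntegral_mono' measurableSet_Ioi h

theorem lintegral_ofReal_neg_le_mul_of_le_cthickening {Z : Type*} [PseudoMetricSpace Z]
    [ProperSpace Z] [MeasurableSpace Z] [OpensMeasurableSpace Z] {μ ν : Measure Z} {c : ℝ≥0∞}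
    {ε : ℝ} (hε : 0 ≤ ε) (hμν : ∀ A, MeasurableSet A → ν A ≤ c * μ (cthickening ε A))
    {f g : Z → ℝ} (hf : Continuous f) (hg : Continuous g)
    (hfg : ∀ x y, dist x y ≤ ε → 0 ≤ f x + g y) :
    ∫⁻ y, ENNReal.ofReal (max (-g y) 0) ∂ν ≤ c * ∫⁻ x, ENNReal.ofReal (max (f x) 0) ∂μ := by
  refine lintegral_ofReal_le_mul_of_meas_lt_le (fun _ ↦ le_max_right _ _)
    (fun _ ↦ le_max_right _ _) (by fun_prop) (by fun_prop) fun t ht ↦ ?_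
  have hlevel : {y | t < max (-g y) 0} = {y | g y < -t} := by
    ext y
    simp only [mem_ofPred_eq, lt_max_iff, not_lt.2 ht.le, or_false]
    constructor <;> intro <;> linarith
  have hsub : cthickening ε {y | g y < -t} ⊆ {x | t ≤ max (f x) 0} := by
    have hcl : closure {y | g y < -t} ⊆ {y | g y ≤ -t} :=
      closure_minimal (fun y (hy : g y < -t) ↦ hy.le) (isClosed_le hg continuous_const)
    rw [← cthickening_closure, isClosed_closure.cthickening_eq_biUnion_closedBall hε]
    simp only [iUnion_subset_iff]
    intro y hy x hx
    have := hfg x y (mem_closedBall.1 hx)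
    have := hcl hy
    simp only [mem_ofPred_eq] at *
    exact le_max_of_le_left (by linarith)
  rw [hlevel]
  exact (hμν _ (isOpen_lt hg continuous_const).measurableSet).trans
    (by gcongr)

section RelProkhorov

variable {Z : Type*} [MetricSpace Z] [MeasurableSpace Z]

def RelProkhorovClose (ε δ : ℝ) (μ ν : Measure Z) : Prop :=
  ∀ A : Set Z, MeasurableSet A →
    ν A ≤ ENNReal.ofReal (Real.exp δ) * μ (cthickening ε A) ∧
    μ A ≤ ENNReal.ofReal (Real.exp δ) * ν (cthickening ε A)

variable [CompactSpace Z] [BorelSpace Z] {μ ν : Measure Z} [IsFiniteMeasure μ] [IsFiniteMeasure ν]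
  {ε δ : ℝ}

theorem exp_neg_mul_integral_negPart_le (hε : 0 ≤ ε)
    (hμν : ∀ A, MeasurableSet A → ν A ≤ ENNReal.ofReal (Real.exp δ) * μ (cthickening ε A))
    {f g : C(Z, ℝ)} (hfg : ∀ x y, dist x y ≤ ε → 0 ≤ f x + g y) :
    Real.exp (-δ) * ∫ y, max (-g y) 0 ∂ν ≤ ∫ x, max (f x) 0 ∂μ := by
  have h := lintegral_ofReal_neg_le_mul_of_le_cthickening hε hμν f.continuous g.continuous hfg
  rw [← ofReal_integral_eq_lintegral_ofReal
      (by fun_prop : Continuous fun y ↦ max (-g y) 0).integrable_of_compactSpace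
      (.of_forall fun _ ↦ le_max_right _ _),
    ← ofReal_integral_eq_lintegral_ofReal
      (by fun_prop : Continuous fun x ↦ max (f x) 0).integrable_of_compactSpace
      (.of_forall fun _ ↦ le_max_right _ _),
    ← ENNReal.ofReal_mul (Real.exp_nonneg δ), ENNReal.ofReal_le_ofReal_iff
      (mul_nonneg (Real.exp_nonneg δ) (integral_nonneg fun x ↦ le_max_right (f x) 0))] at h
  calc Real.exp (-δ) * ∫ y, max (-g y) 0 ∂ν
      ≤ Real.exp (-δ) * (Real.exp δ * ∫ x, max (f x) 0 ∂μ) := by gcongr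
    _ = ∫ x, max (f x) 0 ∂μ := by
      rw [← mul_assoc, ← Real.exp_add, neg_add_cancel, Real.exp_zero, one_mul]

theorem RelProkhorovClose.skewIntegral_add_nonneg (h : RelProkhorovClose ε δ μ ν) (hε : 0 ≤ ε)
    (hδ : 0 ≤ δ) {f g : C(Z, ℝ)} (hfg : ∀ x y, dist x y ≤ ε → 0 ≤ f x + g y) :
    0 ≤ skewIntegral μ (Real.exp (-δ)) f + skewIntegral ν (Real.exp (-δ)) g := by
  have hk : Real.exp (-δ) ≤ 1 := Real.exp_le_one_iff.2 (neg_nonpos.2 hδ)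
  rw [skewIntegral_eq_sub _ hk, skewIntegral_eq_sub _ hk]
  have h₁ := exp_neg_mul_integral_negPart_le hε (fun A hA ↦ (h A hA).1) hfg
  have h₂ := exp_neg_mul_integral_negPart_le hε (fun A hA ↦ (h A hA).2) (f := g) (g := f)
    fun x y hxy ↦ by rw [add_comm]; exact hfg y x (by rwa [dist_comm])
  linarith

theorem RelProkhorovClose.exists_measure_integral_le (h : RelProkhorovClose ε δ μ ν) (hε : 0 ≤ ε)
    (hδ : 0 ≤ δ) :
    ∃ γ : Measure (Z × Z), IsFiniteMeasure γ ∧ ∀ (φ : C(Z × Z, ℝ)) (f g : C(Z, ℝ)),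
      (∀ x y, dist x y ≤ ε → φ (x, y) ≤ f x + g y) →
      ∫ p, φ p ∂γ ≤ skewIntegral μ (Real.exp (-δ)) f + skewIntegral ν (Real.exp (-δ)) g := by
  let C : ConvexCone ℝ C(Z × Z, ℝ) :=
    { carrier := {φ | ∀ x y, dist x y ≤ ε → 0 ≤ φ (x, y)}
      smul_mem' := fun _ hc _ hφ x y hxy ↦ mul_nonneg hc.le (hφ x y hxy)
      add_mem' := fun _ hφ _ hψ x y hxy ↦ add_nonneg (hφ x y hxy) (hψ x y hxy) }
  let T : C(Z, ℝ) × C(Z, ℝ) →ₗ[ℝ] C(Z × Z, ℝ) :=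
    (ContinuousMap.compRightAlgHom ℝ ℝ ContinuousMap.fst).toLinearMap.coprod
      (ContinuousMap.compRightAlgHom ℝ ℝ ContinuousMap.snd).toLinearMap
  have hT (v : C(Z, ℝ) × C(Z, ℝ)) (x y : Z) : T v (x, y) = v.1 x + v.2 y := rfl
  obtain ⟨Λ, hΛ⟩ := C.exists_linearMap_le_of_sublinear T
    (fun v ↦ skewIntegral μ (Real.exp (-δ)) v.1 + skewIntegral ν (Real.exp (-δ)) v.2)
    (fun v w ↦ by
      have := skewIntegral_add_le μ (k := Real.exp (-δ)) v.1 w.1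
      have := skewIntegral_add_le ν (k := Real.exp (-δ)) v.2 w.2
      simp only [Prod.fst_add, Prod.snd_add]
      linarith)
    (fun c hc v ↦ by
      simp only [Prod.smul_fst, Prod.smul_snd, skewIntegral_smul _ hc.le, mul_add])
    (fun φ ↦ ⟨(ContinuousMap.const Z ‖φ‖, 0), fun x y _ ↦ by
      simpa [hT] using (le_abs_self _).trans (φ.norm_coe_le_norm (x, y))⟩)
    (fun v hv ↦ h.skewIntegral_add_nonneg hε hδ fun x y hxy ↦ hv x y hxy)
  have hΛ_le (φ : C(Z × Z, ℝ)) (f g : C(Z, ℝ))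
      (hφ : ∀ x y, dist x y ≤ ε → φ (x, y) ≤ f x + g y) :
      Λ φ ≤ skewIntegral μ (Real.exp (-δ)) f + skewIntegral ν (Real.exp (-δ)) g :=
    hΛ φ (f, g) fun x y hxy ↦ sub_nonneg.2 (hφ x y hxy)
  obtain ⟨γ, hγ, hγΛ⟩ := ContinuousMap.exists_measure_integral_eq Λ fun φ hφ ↦ by
    have := hΛ_le (-φ) 0 0 fun x y _ ↦ by simpa using hφ (x, y)
    simpa using this
  exact ⟨γ, hγ, fun φ f g hφ ↦ (hγΛ φ).trans_le (hΛ_le φ f g hφ)⟩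

theorem RelProkhorovClose.exists_coupling (h : RelProkhorovClose ε δ μ ν) (hε : 0 ≤ ε)
    (hδ : 0 ≤ δ) :
    ∃ γ : Measure (Z × Z),
      ENNReal.ofReal (Real.exp (-δ)) • μ ≤ γ.map Prod.fst ∧ γ.map Prod.fst ≤ μ ∧
      ENNReal.ofReal (Real.exp (-δ)) • ν ≤ γ.map Prod.snd ∧ γ.map Prod.snd ≤ ν ∧
      γ {p : Z × Z | ε < dist p.1 p.2} = 0 := by
  obtain ⟨γ, hγfin, hγ⟩ := h.exists_measure_integral_le hε hδ
  have hk : Real.exp (-δ) ≤ 1 := Real.exp_le_one_iff.2 (neg_nonpos.2 hδ)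
  let toC (u : Z →ᵇ ℝ≥0) : C(Z, ℝ) := ⟨fun x ↦ u x, by fun_prop⟩
  have htoC (u : Z →ᵇ ℝ≥0) : 0 ≤ toC u := fun x ↦ (u x).2
  have hmap {π : Z × Z → Z} (hπ : Continuous π) (u : Z →ᵇ ℝ≥0) :
      ∫ x, (u x : ℝ) ∂γ.map π = ∫ p, (u (π p) : ℝ) ∂γ :=
    integral_map hπ.aemeasurable (by fun_prop : Continuous fun x ↦ (u x : ℝ)).aestronglyMeasurable
  have hsmul (ρ : Measure Z) (u : Z →ᵇ ℝ≥0) :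
      ∫ x, (u x : ℝ) ∂(ENNReal.ofReal (Real.exp (-δ)) • ρ) =
        Real.exp (-δ) * ∫ x, (u x : ℝ) ∂ρ := by
    rw [integral_smul_measure, ENNReal.toReal_ofReal (Real.exp_nonneg _), smul_eq_mul]
  have := μ.smul_finite (ENNReal.ofReal_ne_top (r := Real.exp (-δ)))
  have := ν.smul_finite (ENNReal.ofReal_ne_top (r := Real.exp (-δ)))
  refine ⟨γ, Measure.le_of_forall_integral_le fun u ↦ ?_,
    Measure.le_of_forall_integral_le fun u ↦ ?_, Measure.le_of_forall_integral_le fun u ↦ ?_,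
    Measure.le_of_forall_integral_le fun u ↦ ?_, ?_⟩
  · have := hγ (-(toC u).comp .fst) (-toC u) 0 fun x y _ ↦ by simp [toC]
    rw [skewIntegral_neg_of_nonneg _ hk (htoC u), skewIntegral_zero] at this
    rw [hsmul, hmap continuous_fst]
    simpa [toC, integral_neg] using this
  · have := hγ ((toC u).comp .fst) (toC u) 0 fun x y _ ↦ by simp [toC]
    rw [skewIntegral_of_nonneg _ hk (htoC u), skewIntegral_zero] at this
    rw [hmap continuous_fst]
    simpa [toC] using this
  · have := hγ (-(toC u).comp .snd) 0 (-toC u) fun x y _ ↦ by simp [toC]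
    rw [skewIntegral_neg_of_nonneg _ hk (htoC u), skewIntegral_zero] at this
    rw [hsmul, hmap continuous_snd]
    simpa [toC, integral_neg] using this
  · have := hγ ((toC u).comp .snd) 0 (toC u) fun x y _ ↦ by simp [toC]
    rw [skewIntegral_of_nonneg _ hk (htoC u), skewIntegral_zero] at this
    rw [hmap continuous_snd]
    simpa [toC] using this
  · have hD : IsClosed {p : Z × Z | dist p.1 p.2 ≤ ε} :=
      isClosed_le (by fun_prop) continuous_const
    simpa [compl_ofPred] using γ.measure_compl_eq_zero_of_integral_nonpos hD fun φ _ hφ ↦ by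
      simpa using hγ φ.toContinuousMap 0 0 fun x y hxy ↦ by
        simp [hφ (show (x, y) ∈ {p : Z × Z | dist p.1 p.2 ≤ ε} from hxy)]

end RelProkhorov

theorem mul_measure_le_measure_cthickening {X Ω : Type*} [PseudoMetricSpace X] [MeasurableSpace X]
    [OpensMeasurableSpace X] [MeasurableSpace Ω] {γ : Measure Ω} {π₁ π₂ : Ω → X}
    (hπ₁ : Measurable π₁) (hπ₂ : Measurable π₂) {μ ν : Measure X} {c : ℝ≥0∞} {ε : ℝ}
    (hμ : c • μ ≤ γ.map π₁) (hν : γ.map π₂ ≤ ν) (hγ : ∀ᵐ ω ∂γ, dist (π₁ ω) (π₂ ω) ≤ ε)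
    {A : Set X} (hA : MeasurableSet A) : c * μ A ≤ ν (cthickening ε A) := calc
  c * μ A = (c • μ) A := rfl
  _ ≤ γ.map π₁ A := hμ A
  _ = γ (π₁ ⁻¹' A) := Measure.map_apply hπ₁ hA
  _ ≤ γ (π₂ ⁻¹' cthickening ε A) := measure_mono_ae <| hγ.mono fun ω hω hωA ↦
    mem_cthickening_of_dist_le _ _ _ _ hωA (by rwa [dist_comm])
  _ = γ.map π₂ (cthickening ε A) :=
    (Measure.map_apply hπ₂ isClosed_cthickening.measurableSet).symm
  _ ≤ ν (cthickening ε A) := hν _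

/-- Relative Prokhorov closeness is characterized by approximate coupling. -/
theorem relative_prokhorov_iff_approximate_coupling
    {Z : Type*} [MetricSpace Z] [CompactSpace Z] [MeasurableSpace Z] [BorelSpace Z]
    (μX μY : Measure Z) [IsFiniteMeasure μX] [IsFiniteMeasure μY]
    (ε δ : ℝ) (hε : 0 ≤ ε) (hδ : 0 ≤ δ) :
    (∀ A : Set Z, MeasurableSet A →
        μY A ≤ ENNReal.ofReal (Real.exp δ) * μX (Metric.cthickening ε A) ∧
        μX A ≤ ENNReal.ofReal (Real.exp δ) * μY (Metric.cthickening ε A))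
    ↔ ∃ (μX' μY' : Measure Z) (γ : Measure (Z × Z)),
        ENNReal.ofReal (Real.exp (-δ)) • μX ≤ μX' ∧ μX' ≤ μX ∧
        ENNReal.ofReal (Real.exp (-δ)) • μY ≤ μY' ∧ μY' ≤ μY ∧
        γ.map Prod.fst = μX' ∧ γ.map Prod.snd = μY' ∧
        γ {p : Z × Z | ε < dist p.1 p.2} = 0 := by
  refine ⟨fun h ↦ ?_, ?_⟩
  · obtain ⟨γ, hX₁, hX₂, hY₁, hY₂, hγ⟩ := RelProkhorovClose.exists_coupling h hε hδ
    exact ⟨_, _, γ, hX₁, hX₂, hY₁, hY₂, rfl, rfl, hγ⟩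
  · rintro ⟨_, _, γ, hX₁, hX₂, hY₁, hY₂, rfl, rfl, hγ⟩ A hA
    have hγ' : ∀ᵐ p ∂γ, dist p.1 p.2 ≤ ε :=
      (measure_eq_zero_iff_ae_notMem.1 hγ).mono fun p hp ↦ not_lt.1 hp
    have hexp {a b : ℝ≥0∞} (hab : ENNReal.ofReal (Real.exp (-δ)) * a ≤ b) :
        a ≤ ENNReal.ofReal (Real.exp δ) * b := calc
      a = ENNReal.ofReal (Real.exp δ) * (ENNReal.ofReal (Real.exp (-δ)) * a) := by
        rw [← mul_assoc, ← ENNReal.ofReal_mul (Real.exp_nonneg _), ← Real.exp_add,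
          add_neg_cancel, Real.exp_zero, ENNReal.ofReal_one, one_mul]
      _ ≤ ENNReal.ofReal (Real.exp δ) * b := by gcongr
    exact ⟨hexp (mul_measure_le_measure_cthickening measurable_snd measurable_fst hY₁ hX₂
        (hγ'.mono fun p hp ↦ by rwa [dist_comm]) hA),
      hexp (mul_measure_le_measure_cthickening measurable_fst measurable_snd hX₁ hY₂ hγ' hA)⟩
end

section
/- (Dulmage–Mendelsohn) Let G be a bipartite graph with partite sets M and W, and let M₀ ⊂ M, W₀ ⊂ W be finite subsets such that for every subset A of M₀ or of W₀, the graph neighborhood N_G(A) satisfies |N_G(A)| ≥ |A|. Then G contains a matching covering M₀ ∪ W₀. -/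
/-!
Hall's theorem gives injections `f : M₀ → W` and `g : W₀ → M` along edges of the graph (a
neighbourhood may be infinite, but truncating it to `|M₀|` vertices keeps Hall's condition).
The two edge sets are then merged as in the proof of the Cantor–Schröder–Bernstein theorem:
the `g`-edges are used on the alternating chains that, traced backwards, stop in
`W₀ \ range f`, and the `f`-edges everywhere else.
-/

open Function

theorem Set.exists_finset_subset_and_le_card_or_eq {α : Type*} (s : Set α) (n : ℕ) :
    ∃ t : Finset α, ↑t ⊆ s ∧ (n ≤ t.card ∨ ↑t = s) := by
  by_cases hs : s.Finite
  · exact ⟨hs.toFinset, by simp, Or.inr hs.coe_toFinset⟩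
  · obtain ⟨t, hts, htn⟩ := Set.Infinite.exists_subset_card_eq hs n
    exact ⟨t, hts, Or.inl htn.ge⟩

theorem exists_injective_of_card_le_mk_biUnion {ι β : Type u} [Fintype ι] (N : ι → Set β)
    (hall : ∀ u : Finset ι, (u.card : Cardinal) ≤ Cardinal.mk ↥(⋃ i ∈ u, N i)) :
    ∃ f : ι → β, Injective f ∧ ∀ i, f i ∈ N i := by
  classical
  choose t htN ht using fun i => (N i).exists_finset_subset_and_le_card_or_eq (Fintype.card ι)
  have hall' : ∀ u : Finset ι, u.card ≤ (u.biUnion t).card := by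
    intro u
    by_cases hbig : ∃ i ∈ u, Fintype.card ι ≤ (t i).card
    · obtain ⟨i, hi, hti⟩ := hbig
      calc u.card ≤ Fintype.card ι := u.card_le_univ
        _ ≤ (t i).card := hti
        _ ≤ (u.biUnion t).card := Finset.card_le_card (Finset.subset_biUnion_of_mem t hi)
    · push Not at hbig
      have hu : (↑(u.biUnion t) : Set β) = ⋃ i ∈ u, N i := by
        rw [Finset.coe_biUnion]
        exact Set.iUnion₂_congr fun i hi => (ht i).resolve_left (hbig i hi).not_ge
      have := hall u
      rw [← hu, Finset.coe_sort_coe, Cardinal.mk_coe_finset] at this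
      exact_mod_cast this
  obtain ⟨f, hf, hft⟩ := (Finset.all_card_le_biUnion_card_iff_exists_injective t).mp hall'
  exact ⟨f, hf, fun i => htN i (hft i)⟩

theorem Set.Finite.exists_injective_of_hall {α β : Type u} {r : α → β → Prop} {s : Set α}
    (hs : s.Finite) (hall : ∀ A ⊆ s, Cardinal.mk ↥A ≤ Cardinal.mk ↥{b | ∃ a ∈ A, r a b}) :
    ∃ f : s → β, Injective f ∧ ∀ a : s, r a (f a) := by
  have := hs.fintype
  refine exists_injective_of_card_le_mk_biUnion (fun a : s => {b | r a b}) fun u => ?_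
  have h := hall (Subtype.val '' (u : Set s)) (by simp)
  rw [Cardinal.mk_image_eq Subtype.val_injective, Finset.coe_sort_coe, Cardinal.mk_coe_finset] at h
  convert h using 3
  ext b
  simp

namespace DulmageMendelsohn

variable {M W : Type*} {M₀ : Set M} {W₀ : Set W} (f : M₀ → W) (g : W₀ → M)

/-- `w` lies on a backward chain `w = f m₁, m₁ = g w₁, w₁ = f m₂, …` that stops at a vertex
of `W₀` outside the range of `f`. -/
inductive RootedInW : W → Prop
  | root (w : W₀) (hw : ∀ m, f m ≠ w) : RootedInW w
  | step (w : W₀) (m : M₀) (w' : W₀) (hm : f m = w) (hw' : g w' = m) (h : RootedInW w') :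
      RootedInW w

def RootedInM (m : M₀) : Prop :=
  ∃ w : W₀, g w = m ∧ RootedInW f g w

def matching : Set (M × W) :=
  {p | ∃ m : M₀, p = ((m : M), f m) ∧ ¬RootedInM f g m} ∪
    {p | ∃ w : W₀, p = (g w, (w : W)) ∧ RootedInW f g w}

variable {f g}

theorem matching_subset {E : Set (M × W)} (hf : ∀ m : M₀, ((m : M), f m) ∈ E)
    (hg : ∀ w, (g w, (w : W)) ∈ E) : matching f g ⊆ E := by
  rintro p (⟨m, rfl, -⟩ | ⟨w, rfl, -⟩)
  exacts [hf m, hg w]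

theorem apply_ne_of_rootedInW (hf : Injective f) {m : M₀} {w : W} (hm : ¬RootedInM f g m)
    (hw : RootedInW f g w) : f m ≠ w := by
  intro hmw
  cases hw with
  | root w hw => exact hw m hmw
  | step w m' w' hm' hw' h => exact hm ⟨w', hf (hm'.trans hmw.symm) ▸ hw', h⟩

theorem exists_apply_eq_of_not_rootedInW (w : W₀) (hw : ¬RootedInW f g w) :
    ∃ m, f m = w ∧ ¬RootedInM f g m := by
  by_contra! h
  obtain ⟨m, hm⟩ : ∃ m, f m = w := by
    by_contra! h'
    exact hw (.root w h')
  obtain ⟨w', hw', hw'W⟩ := h m hm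
  exact hw (.step w m w' hm hw' hw'W)

theorem matching_pairwise (hf : Injective f) (hg : Injective g) :
    ∀ p ∈ matching f g, ∀ q ∈ matching f g, p ≠ q → p.1 ≠ q.1 ∧ p.2 ≠ q.2 := by
  have hM {m : M₀} {w : W₀} (hm : ¬RootedInM f g m) (hw : RootedInW f g w) : (m : M) ≠ g w :=
    fun h => hm ⟨w, h.symm, hw⟩
  rintro _ (⟨m₁, rfl, hm₁⟩ | ⟨w₁, rfl, hw₁⟩) _ (⟨m₂, rfl, hm₂⟩ | ⟨w₂, rfl, hw₂⟩) hne
  · exact ⟨fun h => hne (by rw [Subtype.ext h]), fun h => hne (by rw [hf h])⟩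
  · exact ⟨hM hm₁ hw₂, apply_ne_of_rootedInW hf hm₁ hw₂⟩
  · exact ⟨(hM hm₂ hw₁).symm, (apply_ne_of_rootedInW hf hm₂ hw₁).symm⟩
  · exact ⟨fun h => hne (by rw [hg h]), fun h => hne (by rw [Subtype.ext h])⟩

theorem exists_left_mem_matching (m : M) (hm : m ∈ M₀) : ∃ w, (m, w) ∈ matching f g := by
  by_cases h : RootedInM f g ⟨m, hm⟩
  · obtain ⟨w, hgw, hw⟩ := h
    exact ⟨w, .inr ⟨w, by rw [hgw], hw⟩⟩
  · exact ⟨f ⟨m, hm⟩, .inl ⟨⟨m, hm⟩, rfl, h⟩⟩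

theorem exists_right_mem_matching (w : W) (hw : w ∈ W₀) : ∃ m, (m, w) ∈ matching f g := by
  by_cases h : RootedInW f g w
  · exact ⟨g ⟨w, hw⟩, .inr ⟨⟨w, hw⟩, rfl, h⟩⟩
  · obtain ⟨m, hmw, hm⟩ := exists_apply_eq_of_not_rootedInW ⟨w, hw⟩ h
    exact ⟨m, .inl ⟨m, by rw [hmw], hm⟩⟩

end DulmageMendelsohn

/-- Dulmage–Mendelsohn theorem for bipartite graphs: if every subset of `M₀`
and of `W₀` satisfies Hall's condition, then there is a matching covering
`M₀ ∪ W₀`. The bipartite graph is encoded by its edge set `E ⊆ M × W`. -/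
theorem dulmage_mendelsohn
    {M W : Type u} (E : Set (M × W)) (M₀ : Set M) (W₀ : Set W)
    (hM₀ : M₀.Finite) (hW₀ : W₀.Finite)
    (hHallM : ∀ A ⊆ M₀, Cardinal.mk ↥A ≤ Cardinal.mk ↥{w | ∃ m ∈ A, (m, w) ∈ E})
    (hHallW : ∀ B ⊆ W₀, Cardinal.mk ↥B ≤ Cardinal.mk ↥{m | ∃ w ∈ B, (m, w) ∈ E}) :
    ∃ S ⊆ E, (∀ p ∈ S, ∀ q ∈ S, p ≠ q → p.1 ≠ q.1 ∧ p.2 ≠ q.2) ∧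
      (∀ m ∈ M₀, ∃ w, (m, w) ∈ S) ∧ (∀ w ∈ W₀, ∃ m, (m, w) ∈ S) := by
  obtain ⟨f, hf, hfE⟩ := hM₀.exists_injective_of_hall hHallM
  obtain ⟨g, hg, hgE⟩ := hW₀.exists_injective_of_hall (r := fun w m => (m, w) ∈ E) hHallW
  exact ⟨DulmageMendelsohn.matching f g, DulmageMendelsohn.matching_subset hfE hgE,
    DulmageMendelsohn.matching_pairwise hf hg, DulmageMendelsohn.exists_left_mem_matching,
    DulmageMendelsohn.exists_right_mem_matching⟩
end

section
/- Stability of the SLV condition: if mm-spaces X and Y are mm-relative (ε,δ)-close with 0 < ε ≤ ρ/12, and X satisfies SLV(Λ, ρ−2ε, 5ε), then Y satisfies SLV(6e^{2δ}Λ, ρ, ε). -/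
open MeasureTheory Metric Set

/-- Closed `ε`-neighborhood of a set with respect to a distance function `d`. -/
def nbhdC {Z : Type*} (d : Z → Z → ℝ) (ε : ℝ) (A : Set Z) : Set Z :=
  {z | ∃ a ∈ A, d z a ≤ ε}

/-- `d` is a semi-metric on the disjoint union `X ⊕ Y` extending the metrics of `X` and `Y`. -/
def IsSemiMetricExt {X Y : Type*} [MetricSpace X] [MetricSpace Y]
    (d : X ⊕ Y → X ⊕ Y → ℝ) : Prop :=
  (∀ z, d z z = 0) ∧ (∀ z w, 0 ≤ d z w) ∧ (∀ z w, d z w = d w z) ∧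
  (∀ z w v, d z v ≤ d z w + d w v) ∧
  (∀ x x' : X, d (Sum.inl x) (Sum.inl x') = dist x x') ∧
  (∀ y y' : Y, d (Sum.inr y) (Sum.inr y') = dist y y')

/-- The mm-spaces `X` and `Y` are mm-relative `(ε,δ)`-close. -/
def MMClose {X Y : Type*} [MetricSpace X] [MetricSpace Y]
    [MeasurableSpace X] [MeasurableSpace Y]
    (μX : MeasureTheory.Measure X) (μY : MeasureTheory.Measure Y) (ε δ : ℝ) : Prop :=
  ∃ d : X ⊕ Y → X ⊕ Y → ℝ, IsSemiMetricExt d ∧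
    ∀ A : Set (X ⊕ Y), MeasurableSet A →
      μY (Sum.inr ⁻¹' A) ≤ ENNReal.ofReal (Real.exp δ) * μX (Sum.inl ⁻¹' nbhdC d ε A) ∧
      μX (Sum.inl ⁻¹' A) ≤ ENNReal.ofReal (Real.exp δ) * μY (Sum.inr ⁻¹' nbhdC d ε A)

/-- The support of a measure on a metric space. -/
def mSupp {X : Type*} [MetricSpace X] [MeasurableSpace X]
    (μ : MeasureTheory.Measure X) : Set X :=
  {x | ∀ r > 0, 0 < μ (Metric.ball x r)}

/-- The spherical layer volume condition `SLV(Λ, ρ, ε)`. -/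
def SLV {X : Type*} [MetricSpace X] [MeasurableSpace X]
    (μ : MeasureTheory.Measure X) (Λ ρ ε : ℝ) : Prop :=
  ∀ x ∈ mSupp μ,
    μ (Metric.ball x (ρ + ε) \ Metric.ball x ρ)
      ≤ ENNReal.ofReal (Λ * (ε / ρ)) * μ (Metric.ball x ρ)

/-!
Pick a point `x₀` of the support of `μX` within `ε` of `y` in the glued semi-metric (it exists
because `X` is compact and every ball around `y` carries mass, which closeness pushes onto `X`).
The `ε`-neighbourhood of the annulus `ρ ≤ |· - y| < ρ + ε` lies in the annulus
`ρ - 2ε ≤ |· - x₀| < ρ + 3ε`, and the `ε`-neighbourhood of `B(x₀, ρ - 2ε)` lies in `B(y, ρ)`.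
Transferring measure twice costs `e^{2δ}`, and `5ε / (ρ - 2ε) ≤ 6ε / ρ` as soon as `12ε ≤ ρ`.
-/

open scoped ENNReal

theorem mSupp_eq_support {X : Type*} [MetricSpace X] [MeasurableSpace X] (μ : Measure X) :
    mSupp μ = μ.support :=
  Set.ext fun _ => nhds_basis_ball.mem_measureSupport.symm

theorem IsCompact.exists_le_of_forall_exists_le_add {α : Type*} [TopologicalSpace α]
    {s : Set α} (hs : IsCompact s) {f : α → ℝ} (hf : ContinuousOn f s) {a : ℝ}
    (h : ∀ η > 0, ∃ x ∈ s, f x ≤ a + η) : ∃ x ∈ s, f x ≤ a := by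
  obtain ⟨x₁, hx₁, -⟩ := h 1 one_pos
  obtain ⟨x₀, hx₀, hmin⟩ := hs.exists_isMinOn ⟨x₁, hx₁⟩ hf
  refine ⟨x₀, hx₀, le_of_forall_pos_le_add fun η hη => ?_⟩
  obtain ⟨x, hx, hfx⟩ := h η hη
  exact (hmin hx).trans hfx

theorem five_mul_div_sub_two_mul_le {ε ρ : ℝ} (hε : 0 < ε) (hερ : 12 * ε ≤ ρ) :
    5 * ε / (ρ - 2 * ε) ≤ 6 * (ε / ρ) := by
  rw [mul_div_assoc', div_le_div_iff₀ (by linarith) (by linarith)]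
  nlinarith

namespace IsSemiMetricExt

variable {X Y : Type*} [MetricSpace X] [MetricSpace Y] {d : X ⊕ Y → X ⊕ Y → ℝ}

theorem continuous_inl_left (hd : IsSemiMetricExt d) (z : X ⊕ Y) :
    Continuous fun x : X => d (.inl x) z := by
  obtain ⟨-, -, -, htri, hdX, -⟩ := hd
  refine (LipschitzWith.of_le_add fun a b => ?_).continuous
  simpa only [hdX, add_comm] using htri (.inl a) (.inl b) z

variable [MeasurableSpace X] [MeasurableSpace Y] {μX : Measure X} {μY : Measure Y}
  {c : ℝ≥0∞} {ε : ℝ} {x₀ : X} {y : Y}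

theorem exists_mem_mSupp_le [CompactSpace X] [OpensMeasurableSpace Y]
    (hd : IsSemiMetricExt d)
    (hYX : ∀ A, MeasurableSet A → μY (Sum.inr ⁻¹' A) ≤ c * μX (Sum.inl ⁻¹' nbhdC d ε A))
    (hy : y ∈ mSupp μY) : ∃ x₀ ∈ mSupp μX, d (.inl x₀) (.inr y) ≤ ε := by
  rw [mSupp_eq_support]
  refine (Measure.isClosed_support (μ := μX)).isCompact.exists_le_of_forall_exists_le_add
    (hd.continuous_inl_left _).continuousOn fun η hη => ?_
  obtain ⟨-, -, -, htri, -, hdY⟩ := hd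
  have hmass := hYX _ (measurableSet_ball (x := y) (ε := η)).inr_image
  rw [preimage_image_eq _ Sum.inr_injective] at hmass
  have hpos : 0 < μX (Sum.inl ⁻¹' nbhdC d ε (Sum.inr '' ball y η)) :=
    pos_iff_ne_zero.2 <| right_ne_zero_of_mul ((hy η hη).trans_le hmass).ne'
  obtain ⟨x, ⟨⟨-, ⟨a, ha, rfl⟩, hxa⟩, hx⟩⟩ := Measure.nonempty_inter_support_of_pos hpos
  have hay : dist a y < η := ha
  have := htri (.inl x) (.inr a) (.inr y)
  rw [hdY] at this
  exact ⟨x, hx, by linarith⟩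

theorem measure_annulus_le [OpensMeasurableSpace Y] (hd : IsSemiMetricExt d)
    (hYX : ∀ A, MeasurableSet A → μY (Sum.inr ⁻¹' A) ≤ c * μX (Sum.inl ⁻¹' nbhdC d ε A))
    (hx₀y : d (.inl x₀) (.inr y) ≤ ε) (r s : ℝ) :
    μY (ball y s \ ball y r) ≤ c * μX (ball x₀ (s + 2 * ε) \ ball x₀ (r - 2 * ε)) := by
  obtain ⟨-, -, hsymm, htri, hdX, hdY⟩ := hd
  have hsub : Sum.inl ⁻¹' nbhdC d ε (Sum.inr '' (ball y s \ ball y r))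
      ⊆ ball x₀ (s + 2 * ε) \ ball x₀ (r - 2 * ε) := by
    rintro x ⟨-, ⟨a, ⟨has, har⟩, rfl⟩, hxa⟩
    have has : dist a y < s := has
    have har : r ≤ dist a y := not_lt.1 har
    have h₁ := htri (.inl x) (.inr a) (.inl x₀)
    have h₂ := htri (.inr a) (.inr y) (.inl x₀)
    have h₃ := htri (.inr a) (.inl x) (.inr y)
    have h₄ := htri (.inl x) (.inl x₀) (.inr y)
    rw [hdX] at h₁ h₄
    rw [hdY, hsymm (.inr y)] at h₂
    rw [hdY, hsymm (.inr a)] at h₃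
    exact ⟨mem_ball.2 (by linarith), fun h => absurd (mem_ball.1 h) (by linarith)⟩
  have hmass := hYX (Sum.inr '' (ball y s \ ball y r))
    (measurableSet_ball.diff measurableSet_ball).inr_image
  rw [preimage_image_eq _ Sum.inr_injective] at hmass
  exact hmass.trans (by gcongr)

theorem measure_ball_le [OpensMeasurableSpace X] (hd : IsSemiMetricExt d)
    (hXY : ∀ A, MeasurableSet A → μX (Sum.inl ⁻¹' A) ≤ c * μY (Sum.inr ⁻¹' nbhdC d ε A))
    (hx₀y : d (.inl x₀) (.inr y) ≤ ε) (r : ℝ) :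
    μX (ball x₀ r) ≤ c * μY (ball y (r + 2 * ε)) := by
  obtain ⟨-, -, -, htri, hdX, hdY⟩ := hd
  have hsub : Sum.inr ⁻¹' nbhdC d ε (Sum.inl '' ball x₀ r) ⊆ ball y (r + 2 * ε) := by
    rintro b ⟨-, ⟨x, hx, rfl⟩, hbx⟩
    have hx : dist x x₀ < r := hx
    have h₁ := htri (.inr b) (.inl x) (.inr y)
    have h₂ := htri (.inl x) (.inl x₀) (.inr y)
    rw [hdY] at h₁
    rw [hdX] at h₂
    exact mem_ball.2 (by linarith)
  have hmass := hXY (Sum.inl '' ball x₀ r) measurableSet_ball.inl_image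
  rw [preimage_image_eq _ Sum.inl_injective] at hmass
  exact hmass.trans (by gcongr)

end IsSemiMetricExt

theorem SLV_stable_under_mm_closeness_general
    {X Y : Type*} [MetricSpace X] [CompactSpace X] [MeasurableSpace X] [BorelSpace X]
    [MetricSpace Y] [MeasurableSpace Y] [BorelSpace Y]
    (μX : Measure X) (μY : Measure Y)
    (Λ ρ ε δ : ℝ) (hΛ : 0 < Λ) (hε : 0 < ε) (hερ : ε ≤ ρ / 12)
    (hclose : MMClose μX μY ε δ)
    (hX : SLV μX Λ (ρ - 2 * ε) (5 * ε)) :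
    SLV μY (6 * Real.exp (2 * δ) * Λ) ρ ε := by
  obtain ⟨d, hd, hclose⟩ := hclose
  have hYX A hA := (hclose A hA).1
  have hXY A hA := (hclose A hA).2
  intro y hy
  obtain ⟨x₀, hx₀, hx₀y⟩ := hd.exists_mem_mSupp_le hYX hy
  have hann := hd.measure_annulus_le hYX hx₀y ρ (ρ + ε)
  have hball := hd.measure_ball_le hXY hx₀y (ρ - 2 * ε)
  rw [show ρ + ε + 2 * ε = ρ - 2 * ε + 5 * ε by ring] at hann
  rw [sub_add_cancel] at hball
  calc μY (ball y (ρ + ε) \ ball y ρ)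
      ≤ ENNReal.ofReal (Real.exp δ) * μX (ball x₀ (ρ - 2 * ε + 5 * ε) \ ball x₀ (ρ - 2 * ε)) :=
        hann
    _ ≤ ENNReal.ofReal (Real.exp δ) *
          (ENNReal.ofReal (Λ * (5 * ε / (ρ - 2 * ε))) * μX (ball x₀ (ρ - 2 * ε))) := by
        gcongr
        exact hX x₀ hx₀
    _ ≤ ENNReal.ofReal (Real.exp δ) * (ENNReal.ofReal (Λ * (5 * ε / (ρ - 2 * ε))) *
          (ENNReal.ofReal (Real.exp δ) * μY (ball y ρ))) := by
        gcongr
    _ = ENNReal.ofReal (Real.exp δ * Real.exp δ) * ENNReal.ofReal (Λ * (5 * ε / (ρ - 2 * ε))) *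
          μY (ball y ρ) := by
        rw [ENNReal.ofReal_mul (Real.exp_nonneg δ)]
        ring
    _ ≤ ENNReal.ofReal (6 * Real.exp (2 * δ) * Λ * (ε / ρ)) * μY (ball y ρ) := by
        rw [← ENNReal.ofReal_mul (by positivity), ← Real.exp_add, ← two_mul]
        gcongr ENNReal.ofReal ?_ * _
        rw [show 6 * Real.exp (2 * δ) * Λ * (ε / ρ) = Real.exp (2 * δ) * (Λ * (6 * (ε / ρ))) by
          ring]
        gcongr
        exact five_mul_div_sub_two_mul_le hε (by linarith)

/-- Stability of the SLV condition under mm-relative `(ε,δ)`-closeness. -/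
theorem SLV_stable_under_mm_closeness
    {X Y : Type*} [MetricSpace X] [CompactSpace X] [MeasurableSpace X] [BorelSpace X]
    [MetricSpace Y] [CompactSpace Y] [MeasurableSpace Y] [BorelSpace Y]
    (μX : Measure X) (μY : Measure Y) [IsFiniteMeasure μX] [IsFiniteMeasure μY]
    (Λ ρ ε δ : ℝ) (hΛ : 0 < Λ) (hδ : 0 ≤ δ) (hε : 0 < ε) (hερ : ε ≤ ρ / 12)
    (hclose : MMClose μX μY ε δ)
    (hX : SLV μX Λ (ρ - 2 * ε) (5 * ε)) :
    SLV μY (6 * Real.exp (2 * δ) * Λ) ρ ε :=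
  SLV_stable_under_mm_closeness_general μX μY Λ ρ ε δ hΛ hε hερ hclose hX
end

section
/- Splitting lemma orthogonal part: with X×Y, semi-metric d_{X|X×Y}, and coupling measure γ as above, if u ∈ L²(X×Y,γ) satisfies ∫_{A×Y} u dγ = 0 for every Borel set A ⊂ X, then Δ^ρ_{X_γ} u = ρ⁻² u. -/
open MeasureTheory Metric Set

theorem setAverage_const_sub_of_setIntegral_eq_zero {α : Type*} [MeasurableSpace α]
    {μ : Measure α} {s : Set α} (hs₀ : μ s ≠ 0) (hs : μ s ≠ ⊤) {f : α → ℝ}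
    (hf : IntegrableOn f s μ) (hf₀ : ∫ p in s, f p ∂μ = 0) (c : ℝ) :
    ⨍ p in s, (c - f p) ∂μ = c := by
  have hμs : μ.real s ≠ 0 := ENNReal.toReal_ne_zero.mpr ⟨hs₀, hs⟩
  have : IsFiniteMeasure (μ.restrict s) := isFiniteMeasure_restrict.mpr hs
  rw [setAverage_eq, integral_sub (integrable_const c) hf, setIntegral_const, hf₀, sub_zero,
    smul_eq_mul, smul_eq_mul, inv_mul_cancel_left₀ hμs]

theorem splitting_laplacian_on_orthogonal_complement_general
    {X Y : Type*} [MetricSpace X] [MeasurableSpace X] [BorelSpace X]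
    [MeasurableSpace Y]
    (γ : Measure (X × Y)) [IsFiniteMeasure γ]
    (ρ : ℝ)
    (hpos : ∀ x : X, 0 < γ (Metric.ball x ρ ×ˢ (Set.univ : Set Y)))
    (u : X × Y → ℝ) (hu : Integrable u γ)
    (hzero : ∀ A : Set X, MeasurableSet A →
      ∫ p in A ×ˢ (Set.univ : Set Y), u p ∂γ = 0) :
    ∀ (x : X) (y : Y),
      (ρ ^ 2)⁻¹ * ((γ (Metric.ball x ρ ×ˢ (Set.univ : Set Y))).toReal)⁻¹ *
          ∫ p in Metric.ball x ρ ×ˢ (Set.univ : Set Y), (u (x, y) - u p) ∂γ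
        = (ρ ^ 2)⁻¹ * u (x, y) := by
  intro x y
  have hmean := setAverage_const_sub_of_setIntegral_eq_zero (hpos x).ne' (measure_ne_top γ _)
    hu.integrableOn (hzero _ measurableSet_ball) (u (x, y))
  rw [setAverage_eq, smul_eq_mul] at hmean
  rw [mul_assoc, ← measureReal_def, hmean]

/-- Splitting lemma, orthogonal part: if `u ∈ L²(X × Y, γ)` has zero integral over
every cylinder `A × Y`, then the ρ-Laplacian of the split space acts on `u` as
multiplication by `ρ⁻²`. -/
theorem splitting_laplacian_on_orthogonal_complement
    {X Y : Type*} [MetricSpace X] [CompactSpace X] [MeasurableSpace X] [BorelSpace X]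
    [MetricSpace Y] [CompactSpace Y] [MeasurableSpace Y] [BorelSpace Y]
    (μX : Measure X) [IsFiniteMeasure μX]
    (γ : Measure (X × Y)) [IsFiniteMeasure γ]
    (hγ : γ.map Prod.fst = μX)
    (ρ : ℝ) (hρ : 0 < ρ)
    (hpos : ∀ x : X, 0 < γ (Metric.ball x ρ ×ˢ (Set.univ : Set Y)))
    (u : X × Y → ℝ) (hu : Integrable u γ)
    (hzero : ∀ A : Set X, MeasurableSet A →
      ∫ p in A ×ˢ (Set.univ : Set Y), u p ∂γ = 0) :
    ∀ (x : X) (y : Y),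
      (ρ ^ 2)⁻¹ * ((γ (Metric.ball x ρ ×ˢ (Set.univ : Set Y))).toReal)⁻¹ *
          ∫ p in Metric.ball x ρ ×ˢ (Set.univ : Set Y), (u (x, y) - u p) ∂γ
        = (ρ ^ 2)⁻¹ * u (x, y) :=
  splitting_laplacian_on_orthogonal_complement_general γ ρ hpos u hu hzero
end

section
/- Weyl-type lower bound (test function computation): let (X,d,μ) be a compact mm-space with μ of full support, ρ > 0, r ≥ ρ, and {x₁,…,x_N} a 3r-separated set. Define u_i(x) = max{1 − d(x,x_i)/r, 0}. Then the u_i have pairwise disjoint supports at distance at least ρ and for each i, D^ρ(u_i)/‖u_i‖² ≤ 4r⁻² μ^ρ(B_{r+ρ}(x_i))/μ^ρ(B_{r/2}(x_i)), where D^ρ(u) = ∬_{d(x,y)<ρ, with x restricted suitably} |u(x)−u(y)|² dμdμ, ‖u‖² = ρ²∫μ(B_ρ(x))u(x)²dμ(x), and μ^ρ(A) = ρ²∫_A μ(B_ρ(x)) dμ(x). -/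
/-!
On the support of `u i` (the ball `B_r(x i)`) the inner integrand of `D^ρ` is at most
`(ρ / r)²`, since `u i` is `r⁻¹`-Lipschitz and `q` ranges over `B_ρ(p)`; the inner integral
vanishes unless `p ∈ B_{r+ρ}(x i)`, so `D^ρ(u i) ≤ r⁻² μ^ρ(B_{r+ρ}(x i))`. On the other
hand `u i ≥ 1/2` on `B_{r/2}(x i)`, so `‖u i‖² ≥ μ^ρ(B_{r/2}(x i)) / 4`, which is positive
because `μ` has full support. The disjointness of supports is the triangle inequality.
-/

open MeasureTheory Metric Set

section Bump

variable {X : Type*} [MetricSpace X]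

noncomputable def bump (c : X) (r : ℝ) (z : X) : ℝ := max (1 - dist z c / r) 0

variable {c z : X} {r : ℝ}

lemma bump_nonneg : 0 ≤ bump c r z := le_max_right _ _

lemma bump_eq_zero_of_le (hr : 0 < r) (h : r ≤ dist z c) : bump c r z = 0 :=
  max_eq_right <| sub_nonpos.2 <| (one_le_div hr).2 h

lemma dist_lt_of_bump_ne_zero (hr : 0 < r) (h : bump c r z ≠ 0) : dist z c < r :=
  lt_of_not_ge fun h' => h (bump_eq_zero_of_le hr h')

lemma bump_le_one (hr : 0 ≤ r) : bump c r z ≤ 1 :=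
  max_le (sub_le_self _ (div_nonneg dist_nonneg hr)) zero_le_one

lemma one_half_le_bump (hr : 0 < r) (h : dist z c ≤ r / 2) : 1 / 2 ≤ bump c r z := by
  have : dist z c / r ≤ 1 / 2 := by rw [div_le_iff₀ hr]; linarith
  exact le_max_of_le_left (by linarith)

lemma lipschitzWith_bump (hr : 0 < r) : LipschitzWith r.toNNReal⁻¹ (bump c r) := by
  refine LipschitzWith.of_dist_le_mul fun p q => ?_
  rw [NNReal.coe_inv, Real.coe_toNNReal _ hr.le, inv_mul_eq_div, Real.dist_eq, bump, bump]
  refine (abs_max_sub_max_le_abs _ _ _).trans ?_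
  rw [sub_sub_sub_cancel_left, ← sub_div, abs_div, abs_of_pos hr]
  gcongr
  exact (abs_dist_sub_le q p c).trans_eq (dist_comm q p)

lemma le_dist_of_bump_ne_zero {c' w : X} (hr : 0 < r) (hc : 3 * r ≤ dist c c')
    (hz : bump c r z ≠ 0) (hw : bump c' r w ≠ 0) : r ≤ dist z w := by
  have h₁ := dist_lt_of_bump_ne_zero hr hz
  have h₂ := dist_lt_of_bump_ne_zero hr hw
  have := dist_triangle4 c z w c'
  rw [dist_comm c z] at this
  linarith

end Bump

section LocalEnergy

variable {X : Type*} [MetricSpace X] [MeasurableSpace X] {μ : Measure X}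

lemma setIntegral_ball_sq_sub_le_of_lipschitzWith {u : X → ℝ} {K : NNReal}
    [IsFiniteMeasure μ] (hu : LipschitzWith K u) (p : X) (ρ : ℝ) :
    ∫ q in ball p ρ, (u p - u q) ^ 2 ∂μ ≤ (K * ρ) ^ 2 * μ.real (ball p ρ) := by
  refine (Real.le_norm_self _).trans (norm_setIntegral_le_of_norm_le_const (measure_lt_top _ _)
    fun q hq => ?_)
  have : |u p - u q| ≤ K * ρ :=
    (hu.dist_le_mul p q).trans (by gcongr; exact (mem_ball'.1 hq).le)
  rw [Real.norm_of_nonneg (sq_nonneg _), ← sq_abs]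
  exact pow_le_pow_left₀ (abs_nonneg _) this 2

lemma setIntegral_ball_sq_sub_eq_zero {u : X → ℝ} {c p : X} {r ρ : ℝ} (hρ : 0 ≤ ρ)
    (hu : ∀ z, r ≤ dist z c → u z = 0) (hp : r + ρ ≤ dist p c) :
    ∫ q in ball p ρ, (u p - u q) ^ 2 ∂μ = 0 := by
  refine setIntegral_eq_zero_of_forall_eq_zero fun q hq => ?_
  have := dist_triangle p q c
  rw [hu p (by linarith), hu q (by linarith [mem_ball'.1 hq]), sub_zero, sq, mul_zero]

end LocalEnergy

section BallMeasure

variable {X : Type*} [MetricSpace X] [SecondCountableTopology X] [MeasurableSpace X]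
  [BorelSpace X] (μ : Measure X) [IsFiniteMeasure μ]

lemma measurable_measure_ball (ρ : ℝ) : Measurable fun p => μ (ball p ρ) := by
  have hs : MeasurableSet {z : X × X | dist z.2 z.1 < ρ} :=
    (isOpen_lt (by fun_prop) continuous_const).measurableSet
  exact measurable_measure_prodMk_left hs

lemma integrable_measureReal_ball (ρ : ℝ) : Integrable (fun p => μ.real (ball p ρ)) μ := by
  refine Integrable.of_bound (C := μ.real univ)
    (measurable_measure_ball μ ρ).ennreal_toReal.aestronglyMeasurable
    (Filter.Eventually.of_forall fun p => ?_)
  rw [Real.norm_of_nonneg measureReal_nonneg]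
  exact measureReal_mono (subset_univ _)

lemma setIntegral_measureReal_ball_pos {ρ : ℝ} (hfull : ∀ p, 0 < μ (ball p ρ)) {s : Set X}
    (hs : 0 < μ s) : 0 < ∫ p in s, μ.real (ball p ρ) ∂μ := by
  rw [setIntegral_pos_iff_support_of_nonneg_ae (ae_of_all _ fun _ => measureReal_nonneg)
    (integrable_measureReal_ball μ ρ).integrableOn]
  have : Function.support (fun p => μ.real (ball p ρ)) = univ := eq_univ_of_forall fun p =>
    (ENNReal.toReal_pos (hfull p).ne' (measure_ne_top _ _)).ne'
  rwa [this, univ_inter]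

variable {μ}

lemma integral_setIntegral_ball_sq_sub_le {u : X → ℝ} {K : NNReal} {c : X} {r ρ : ℝ}
    (hρ : 0 ≤ ρ) (hK : LipschitzWith K u) (hu : ∀ z, r ≤ dist z c → u z = 0) :
    ∫ p, ∫ q in ball p ρ, (u p - u q) ^ 2 ∂μ ∂μ ≤
      (K * ρ) ^ 2 * ∫ p in ball c (r + ρ), μ.real (ball p ρ) ∂μ := by
  rw [← integral_const_mul, ← integral_indicator measurableSet_ball]
  refine integral_mono_of_nonneg
    (ae_of_all _ fun p => setIntegral_nonneg measurableSet_ball fun q _ => sq_nonneg _)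
    (((integrable_measureReal_ball μ ρ).const_mul _).indicator measurableSet_ball)
    (ae_of_all _ fun p => ?_)
  by_cases hp : p ∈ ball c (r + ρ)
  · rw [indicator_of_mem hp]
    exact setIntegral_ball_sq_sub_le_of_lipschitzWith hK p ρ
  · rw [indicator_of_notMem hp]
    exact (setIntegral_ball_sq_sub_eq_zero hρ hu (not_lt.1 hp)).le

end BallMeasure

lemma sq_mul_setIntegral_le_integral_mul_sq {X : Type*} [MeasurableSpace X] {μ : Measure X}
    {f u : X → ℝ} {s : Set X} {a : ℝ} (hs : MeasurableSet s) (hf : 0 ≤ f)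
    (hfi : Integrable f μ) (hfu : Integrable (fun p => f p * u p ^ 2) μ) (ha : 0 ≤ a)
    (hau : ∀ p ∈ s, a ≤ u p) :
    a ^ 2 * ∫ p in s, f p ∂μ ≤ ∫ p, f p * u p ^ 2 ∂μ :=
  calc a ^ 2 * ∫ p in s, f p ∂μ = ∫ p in s, f p * a ^ 2 ∂μ := by
        rw [← integral_const_mul]; simp_rw [mul_comm]
    _ ≤ ∫ p in s, f p * u p ^ 2 ∂μ :=
        setIntegral_mono_on (hfi.integrableOn.mul_const _) hfu.integrableOn hs fun p hp =>
          mul_le_mul_of_nonneg_left (pow_le_pow_left₀ ha (hau p hp) 2) (hf p)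
    _ ≤ ∫ p, f p * u p ^ 2 ∂μ :=
        setIntegral_le_integral hfu (ae_of_all _ fun p => mul_nonneg (hf p) (sq_nonneg _))

theorem rayleigh_quotient_bump_le {X : Type*} [MetricSpace X] [SecondCountableTopology X]
    [MeasurableSpace X] [BorelSpace X] (μ : Measure X) [IsFiniteMeasure μ] {ρ r : ℝ}
    (hfull : ∀ p (s : ℝ), 0 < s → 0 < μ (ball p s)) (hρ : 0 < ρ) (hr : 0 < r) (c : X) :
    ((1 / 2) * ∫ p, (∫ q in ball p ρ, (bump c r p - bump c r q) ^ 2 ∂μ) ∂μ) /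
        (ρ ^ 2 * ∫ p, μ.real (ball p ρ) * bump c r p ^ 2 ∂μ)
      ≤ (4 / r ^ 2) *
        ((ρ ^ 2 * ∫ p in ball c (r + ρ), μ.real (ball p ρ) ∂μ) /
          (ρ ^ 2 * ∫ p in ball c (r / 2), μ.real (ball p ρ) ∂μ)) := by
  set E := ∫ p, (∫ q in ball p ρ, (bump c r p - bump c r q) ^ 2 ∂μ) ∂μ
  set D := ∫ p, μ.real (ball p ρ) * bump c r p ^ 2 ∂μ
  set A := ∫ p in ball c (r + ρ), μ.real (ball p ρ) ∂μ
  set B := ∫ p in ball c (r / 2), μ.real (ball p ρ) ∂μ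
  have hA : 0 ≤ A := setIntegral_nonneg measurableSet_ball fun _ _ => measureReal_nonneg
  have hB : 0 < B :=
    setIntegral_measureReal_ball_pos μ (fun p => hfull p ρ hρ) (hfull c _ (half_pos hr))
  have hE : E ≤ (ρ / r) ^ 2 * A := by
    have := integral_setIntegral_ball_sq_sub_le (μ := μ) hρ.le (lipschitzWith_bump hr)
      fun z => bump_eq_zero_of_le (c := c) hr
    rwa [NNReal.coe_inv, Real.coe_toNNReal _ hr.le, inv_mul_eq_div] at this
  have hD : (1 / 2) ^ 2 * B ≤ D := by
    refine sq_mul_setIntegral_le_integral_mul_sq measurableSet_ball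
      (fun _ => measureReal_nonneg) (integrable_measureReal_ball μ ρ) ?_ (by norm_num)
      fun p hp => one_half_le_bump hr (mem_ball.1 hp).le
    refine (integrable_measureReal_ball μ ρ).mul_bdd (c := 1)
      ((lipschitzWith_bump hr).continuous.pow 2).aestronglyMeasurable (ae_of_all _ fun p => ?_)
    rw [Real.norm_of_nonneg (sq_nonneg _)]
    exact pow_le_one₀ bump_nonneg (bump_le_one hr.le)
  calc (1 / 2 * E) / (ρ ^ 2 * D)
      ≤ (1 / 2 * ((ρ / r) ^ 2 * A)) / (ρ ^ 2 * ((1 / 2) ^ 2 * B)) :=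
        div_le_div₀ (by positivity) (by gcongr) (by positivity) (by gcongr)
    _ = 2 * A / (r ^ 2 * B) := by field_simp
    _ ≤ 4 * A / (r ^ 2 * B) := by gcongr; norm_num
    _ = (4 / r ^ 2) * ((ρ ^ 2 * A) / (ρ ^ 2 * B)) := by field_simp

/-- Weyl-type lower bound, test function computation: the bump functions
`u i = max (1 - dist · (x i) / r) 0` attached to a `3r`-separated family have
supports at mutual distance at least `ρ`, and each has Rayleigh quotient at most
`4 r⁻² μ^ρ(B_{r+ρ}(x i)) / μ^ρ(B_{r/2}(x i))`. -/
theorem weyl_test_functions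
    {X : Type*} [MetricSpace X] [CompactSpace X] [MeasurableSpace X] [BorelSpace X]
    (μ : Measure X) [IsFiniteMeasure μ]
    (hfull : ∀ x : X, ∀ r : ℝ, 0 < r → 0 < μ (Metric.ball x r))
    (ρ r : ℝ) (hρ : 0 < ρ) (hr : ρ ≤ r)
    (N : ℕ) (x : Fin N → X)
    (hsep : ∀ i j, i ≠ j → 3 * r ≤ dist (x i) (x j))
    (u : Fin N → X → ℝ)
    (hu : ∀ i z, u i z = max (1 - dist z (x i) / r) 0) :
    (∀ i j, i ≠ j → ∀ p q, u i p ≠ 0 → u j q ≠ 0 → ρ ≤ dist p q) ∧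
    (∀ i,
      ((1/2) * ∫ p, (∫ q in Metric.ball p ρ, (u i p - u i q) ^ 2 ∂μ) ∂μ) /
          (ρ ^ 2 * ∫ p, (μ (Metric.ball p ρ)).toReal * (u i p) ^ 2 ∂μ)
        ≤ (4 / r ^ 2) *
          ((ρ ^ 2 * ∫ p in Metric.ball (x i) (r + ρ), (μ (Metric.ball p ρ)).toReal ∂μ) /
            (ρ ^ 2 * ∫ p in Metric.ball (x i) (r / 2), (μ (Metric.ball p ρ)).toReal ∂μ))) := by
  obtain rfl : u = fun i => bump (x i) r := funext₂ hu
  have hr₀ : 0 < r := hρ.trans_le hr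
  exact ⟨fun i j hij p q hp hq => hr.trans (le_dist_of_bump_ne_zero hr₀ (hsep i j hij) hp hq),
    fun i => rayleigh_quotient_bump_le μ hfull hρ hr₀ (x i)⟩
end
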